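/- Let A_q^{a_c} be a quantum complete intersection over a field k, set a_{2c} = (a_1, …, a_c, a_1, …, a_c) and q′ = [[q, qᵀ],[qᵀ, q]] (a 2c×2c commutation matrix). Then the assignment X_i ↦ x_i for 1 ≤ i ≤ c induces a well-defined injective k-algebra homomorphism A_q^{a_c} → A_{q′}^{a_{2c}}; in particular, A_q^{a_c} is isomorphic to the subalgebra of A_{q′}^{a_{2c}} generated by x_1, …, x_c. -/
import Mathlib


/-!
The assignment `X_i ↦ x_i` (for `1 ≤ i ≤ c`) induces a well-defined injective `k`-algebra
homomorphism from `A_q^{a_c}` to the doubled quantum complete intersection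
`A_{q'}^{a_{2c}}`, whose image is the subalgebra generated by `x_1, …, x_c`
(Proposition `symmetric` (i)).
-/

noncomputable section

/-- The defining relations of the quantum complete intersection `A_q^a`:
`X_i ^ (a i) = 0` and `X_i * X_j = q i j • (X_j * X_i)`. -/
def qciRel (k : Type) [Field k] (c : ℕ) (q : Fin c → Fin c → k) (a : Fin c → ℕ) :
    FreeAlgebra k (Fin c) → FreeAlgebra k (Fin c) → Prop := fun x y =>
  (∃ i, x = FreeAlgebra.ι k i ^ a i ∧ y = 0) ∨
  (∃ i j, x = FreeAlgebra.ι k i * FreeAlgebra.ι k j ∧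
    y = q i j • (FreeAlgebra.ι k j * FreeAlgebra.ι k i))

/-- The quantum complete intersection `A_q^a = k⟨X_1,…,X_c⟩/(X_i^{a_i}, X_iX_j - q_{ij}X_jX_i)`. -/
abbrev QCI (k : Type) [Field k] (c : ℕ) (q : Fin c → Fin c → k) (a : Fin c → ℕ) : Type :=
  RingQuot (qciRel k c q a)

/-- The generator `x_i` of `A_q^a` (the image of `X_i`). -/
def qciX (k : Type) [Field k] {c : ℕ} (q : Fin c → Fin c → k) (a : Fin c → ℕ) (i : Fin c) :
    QCI k c q a :=
  RingQuot.mkAlgHom k (qciRel k c q a) (FreeAlgebra.ι k i)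

/-- The `2c × 2c` block matrix `[[q, qᵀ], [qᵀ, q]]`. -/
def blockQ {k : Type} {c : ℕ} (q : Fin c → Fin c → k) : Fin (c + c) → Fin (c + c) → k :=
  fun u v =>
    Fin.addCases
      (fun i => Fin.addCases (fun j => q i j) (fun j => q j i) v)
      (fun i => Fin.addCases (fun j => q j i) (fun j => q i j) v) u

/-- The doubled exponent sequence `(a_1, …, a_c, a_1, …, a_c)`. -/
def blockA {c : ℕ} (a : Fin c → ℕ) : Fin (c + c) → ℕ :=
  fun u => Fin.addCases (fun i => a i) (fun i => a i) u

section Aux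

variable (k : Type) [Field k] {c : ℕ} (q : Fin c → Fin c → k) (a : Fin c → ℕ)

lemma qciX_pow (i : Fin c) : qciX k q a i ^ a i = 0 := by
  have h : qciRel k c q a (FreeAlgebra.ι k i ^ a i) 0 := Or.inl ⟨i, rfl, rfl⟩
  unfold qciX
  rw [← map_pow, RingQuot.mkAlgHom_rel k h, map_zero]

lemma qciX_comm (i j : Fin c) :
    qciX k q a i * qciX k q a j = q i j • (qciX k q a j * qciX k q a i) := by
  have h : qciRel k c q a (FreeAlgebra.ι k i * FreeAlgebra.ι k j)
      (q i j • (FreeAlgebra.ι k j * FreeAlgebra.ι k i)) := Or.inr ⟨i, j, rfl, rfl⟩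
  unfold qciX
  rw [← map_mul, RingQuot.mkAlgHom_rel k h, map_smul, map_mul]

end Aux

theorem qci_embeds_in_doubled_qci
    (k : Type) [Field k] (c : ℕ) (hc : 1 ≤ c)
    (q : Fin c → Fin c → k) (a : Fin c → ℕ)
    (hqd : ∀ i, q i i = 1) (hqc : ∀ i j, q i j * q j i = 1) (ha : ∀ i, 2 ≤ a i) :
    ∃ f : QCI k c q a →ₐ[k] QCI k (c + c) (blockQ q) (blockA a),
      Function.Injective f ∧
      (∀ i : Fin c, f (qciX k q a i) = qciX k (blockQ q) (blockA a) (Fin.castAdd c i)) ∧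
      f.range = Algebra.adjoin k
        (Set.range fun i : Fin c => qciX k (blockQ q) (blockA a) (Fin.castAdd c i)) := by
  set Q := blockQ q with hQ
  set A := blockA a with hA
  -- the lift on the free algebra
  set F : FreeAlgebra k (Fin c) →ₐ[k] QCI k (c + c) Q A :=
    FreeAlgebra.lift k (fun i => qciX k Q A (Fin.castAdd c i)) with hF
  have hFrel : ∀ ⦃x y⦄, qciRel k c q a x y → F x = F y := by
    rintro x y (⟨i, rfl, rfl⟩ | ⟨i, j, rfl, rfl⟩)
    · rw [map_pow, map_zero, hF, FreeAlgebra.lift_ι_apply]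
      have := qciX_pow k Q A (Fin.castAdd c i)
      simpa [hA, blockA] using this
    · rw [map_mul, map_smul, map_mul, hF, FreeAlgebra.lift_ι_apply,
        FreeAlgebra.lift_ι_apply]
      have := qciX_comm k Q A (Fin.castAdd c i) (Fin.castAdd c j)
      simpa [hQ, blockQ] using this
  set f : QCI k c q a →ₐ[k] QCI k (c + c) Q A :=
    RingQuot.liftAlgHom k ⟨F, hFrel⟩ with hf
  have hfmk : ∀ x, f (RingQuot.mkAlgHom k (qciRel k c q a) x) = F x := fun x =>
    RingQuot.liftAlgHom_mkAlgHom_apply k _ _ _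
  have hfX : ∀ i : Fin c, f (qciX k q a i) = qciX k Q A (Fin.castAdd c i) := by
    intro i
    rw [qciX, hfmk, hF, FreeAlgebra.lift_ι_apply]
  -- the retraction
  set G : FreeAlgebra k (Fin (c + c)) →ₐ[k] QCI k c q a :=
    FreeAlgebra.lift k
      (Fin.addCases (fun i => qciX k q a i) (fun _ => 0)) with hG
  have hGrel : ∀ ⦃x y⦄, qciRel k (c + c) Q A x y → G x = G y := by
    rintro x y (⟨u, rfl, rfl⟩ | ⟨u, v, rfl, rfl⟩)
    · rw [map_pow, map_zero, hG, FreeAlgebra.lift_ι_apply]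
      refine Fin.addCases (fun i => ?_) (fun i => ?_) u
      · simp only [hA, blockA, Fin.addCases_left]
        exact qciX_pow k q a i
      · simp only [hA, blockA, Fin.addCases_right]
        exact zero_pow (by have := ha i; omega)
    · rw [map_mul, map_smul, map_mul, hG, FreeAlgebra.lift_ι_apply,
        FreeAlgebra.lift_ι_apply]
      refine Fin.addCases (fun i => ?_) (fun i => ?_) u <;>
        refine Fin.addCases (fun j => ?_) (fun j => ?_) v <;>
        simp only [hQ, blockQ, Fin.addCases_left, Fin.addCases_right,
          mul_zero, zero_mul, smul_zero]
      exact qciX_comm k q a i j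
  set g : QCI k (c + c) Q A →ₐ[k] QCI k c q a :=
    RingQuot.liftAlgHom k ⟨G, hGrel⟩ with hg
  have hgmk : ∀ x, g (RingQuot.mkAlgHom k (qciRel k (c + c) Q A) x) = G x := fun x =>
    RingQuot.liftAlgHom_mkAlgHom_apply k _ _ _
  have hgf : ∀ x, g (f x) = x := by
    intro x
    obtain ⟨y, rfl⟩ := RingQuot.mkAlgHom_surjective k (qciRel k c q a) x
    rw [hfmk]
    have : g.comp F = RingQuot.mkAlgHom k (qciRel k c q a) := by
      apply FreeAlgebra.hom_ext
      funext i
      simp only [Function.comp_apply, AlgHom.coe_comp, hF, FreeAlgebra.lift_ι_apply]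
      rw [qciX, hgmk, hG, FreeAlgebra.lift_ι_apply, Fin.addCases_left]
      rfl
    exact DFunLike.congr_fun this y
  have hgen : Algebra.adjoin k (Set.range (qciX k q a)) = ⊤ := by
    have : Set.range (qciX k q a) =
        (RingQuot.mkAlgHom k (qciRel k c q a)) '' Set.range (FreeAlgebra.ι k) := by
      rw [← Set.range_comp]; rfl
    rw [this, ← AlgHom.map_adjoin, FreeAlgebra.adjoin_range_ι, Algebra.map_top,
      AlgHom.range_eq_top]
    exact RingQuot.mkAlgHom_surjective k _
  refine ⟨f, Function.LeftInverse.injective hgf, hfX, ?_⟩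
  have hcomp : (⇑f ∘ qciX k q a) = fun i : Fin c => qciX k Q A (Fin.castAdd c i) :=
    funext hfX
  rw [← Algebra.map_top, ← hgen, AlgHom.map_adjoin, ← Set.range_comp, hcomp]
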